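/- For each n, the number of left-walks of length 2n equals the number of right-walks of length 2n. -/

import Mathlib

open Filter

/-- A step of a lattice walk: North, East, South or West. -/
inductive Step : Type
  | N | E | S | W
  deriving DecidableEq

/-- The vector of a step. -/
def Step.vec : Step → ℤ × ℤ
  | .N => (0, 1)
  | .E => (1, 0)
  | .S => (0, -1)
  | .W => (-1, 0)

/-- The endpoint of a walk starting at the origin. -/
def endpt (w : List Step) : ℤ × ℤ := (w.map Step.vec).sum

/-- All points visited by a walk starting at the origin (including start and end). -/
def positions (w : List Step) : List (ℤ × ℤ) :=
  w.scanl (fun p s => p + s.vec) ((0, 0) : ℤ × ℤ)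

/-- A walk is eager if it contains no ES and no NW corner. -/
def Eager (w : List Step) : Prop :=
  ¬ [Step.E, Step.S] <:+: w ∧ ¬ [Step.N, Step.W] <:+: w

/-- A quarter-plane loop: a nonempty walk returning to its starting point and
staying (weakly) north-east of it. -/
def IsQPLoop (l : List Step) : Prop :=
  l ≠ [] ∧ endpt l = (0, 0) ∧ ∀ p ∈ positions l, 0 ≤ p.1 ∧ 0 ≤ p.2

/-- A walk is standard if every QP-subloop begins with an N step. -/
def Standard (w : List Step) : Prop :=
  ∀ a l b : List Step, w = a ++ l ++ b → IsQPLoop l → l.head? = some Step.N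

/-- The walk stays in the half-plane x + y ≥ 0. -/
def InHalfPlane (w : List Step) : Prop :=
  ∀ p ∈ positions w, 0 ≤ p.1 + p.2

/-- A big-walk: confined to the half-plane x+y ≥ 0, from (0,0) to the line x+y=0,
standard and eager. -/
def IsBigWalk (w : List Step) : Prop :=
  InHalfPlane w ∧ (endpt w).1 + (endpt w).2 = 0 ∧ Standard w ∧ Eager w

/-- A left-walk: a big-walk ending at (x,-x) with x ≤ 0. -/
def IsLeftWalk (w : List Step) : Prop := IsBigWalk w ∧ (endpt w).1 ≤ 0

/-- A right-walk: a big-walk ending at (x,-x) with x ≥ 0. -/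
def IsRightWalk (w : List Step) : Prop := IsBigWalk w ∧ 0 ≤ (endpt w).1

/-- Vertical-happy: every step taken from a point of the lines x+y=0 or x+y=1
is N or S. -/
def VerticalHappy (w : List Step) : Prop :=
  ∀ a s b, w = a ++ s :: b →
    ((endpt a).1 + (endpt a).2 = 0 ∨ (endpt a).1 + (endpt a).2 = 1) →
    s = Step.N ∨ s = Step.S

/-- A deque-walk: a vertical-happy big-walk. -/
def IsDequeWalk (w : List Step) : Prop := IsBigWalk w ∧ VerticalHappy w

/-- The walk stays in the quarter plane x, y ≥ 0. -/
def InQuarterPlane (w : List Step) : Prop :=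
  ∀ p ∈ positions w, 0 ≤ p.1 ∧ 0 ≤ p.2

/-- A 2sip-walk: a quarter-plane walk from (0,0) to (0,0), standard and eager. -/
def Is2sipWalk (w : List Step) : Prop :=
  InQuarterPlane w ∧ endpt w = (0, 0) ∧ Standard w ∧ Eager w

/-- `bCount n` = number of big-walks of length 2n. -/
noncomputable def bCount (n : ℕ) : ℕ :=
  Nat.card {w : List Step // w.length = 2 * n ∧ IsBigWalk w}

/-- `blCount n` = number of left-walks of length 2n. -/
noncomputable def blCount (n : ℕ) : ℕ :=
  Nat.card {w : List Step // w.length = 2 * n ∧ IsLeftWalk w}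

/-- `brCount n` = number of right-walks of length 2n. -/
noncomputable def brCount (n : ℕ) : ℕ :=
  Nat.card {w : List Step // w.length = 2 * n ∧ IsRightWalk w}

/-- `dCount n` = number of deque-walks of length 2n. -/
noncomputable def dCount (n : ℕ) : ℕ :=
  Nat.card {w : List Step // w.length = 2 * n ∧ IsDequeWalk w}

/-- `pCount n` = number of 2sip-walks of length 2n. -/
noncomputable def pCount (n : ℕ) : ℕ :=
  Nat.card {w : List Step // w.length = 2 * n ∧ Is2sipWalk w}

/-!
The bijection keeps every step that lies in some QP-subloop and swaps the others. Hence x + y is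
unchanged at every time, the displacement along a QP-subloop is unchanged, and at times outside
all QP-subloops the position is reflected in the diagonal.

The crux is that the image has exactly the same QP-subloops. A QP-subloop of the image that
revisits its base point splits into shorter ones. Otherwise it lies inside a QP-subloop of the
original, or both of its ends lie outside all QP-subloops, where positions are just reflected:
a QP-subloop of the original straddling one of its ends would force a revisit. So the map is an
involution; it preserves the half-plane, the standard and eager conditions, and sends the
endpoint (x, -x) to (-x, x).
-/

lemma List.exists_eq_append_of_le {α : Type*} {v : List α} {a b : ℕ} (hab : a ≤ b)
    (hb : b ≤ v.length) :
    ∃ x l y, v = x ++ l ++ y ∧ x.length = a ∧ x.length + l.length = b := by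
  refine ⟨v.take a, (v.drop a).take (b - a), v.drop b, ?_, by simp; omega, by simp; omega⟩
  have hdrop : v.drop b = (v.drop a).drop (b - a) := by rw [List.drop_drop]; congr; omega
  rw [List.append_assoc, hdrop, List.take_append_drop, List.take_append_drop]

lemma List.getElem?_length_append {α : Type*} (x : List α) {l : List α} (y : List α)
    (hl : l ≠ []) : (x ++ l ++ y)[x.length]? = l.head? := by
  obtain ⟨s, l, rfl⟩ := List.exists_cons_of_ne_nil hl
  simp

lemma List.pair_infix_iff {α : Type*} {x y : α} {v : List α} :
    [x, y] <:+: v ↔ ∃ i, ∃ h : i + 1 < v.length, v[i] = x ∧ v[i + 1] = y := by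
  constructor
  · rintro ⟨s, t, rfl⟩
    exact ⟨s.length, by simp, by simp, by simp⟩
  · rintro ⟨i, hi, rfl, rfl⟩
    refine ⟨v.take i, v.drop (i + 2), ?_⟩
    conv_rhs => rw [← List.take_append_drop i v, List.drop_eq_getElem_cons (by omega),
      List.drop_eq_getElem_cons hi]
    simp

namespace Step

def swap : Step → Step
  | N => E
  | E => N
  | S => W
  | W => S

@[simp] lemma swap_swap (s : Step) : s.swap.swap = s := by cases s <;> rfl

lemma swap_eq_iff {s t : Step} : s.swap = t ↔ s = t.swap := by
  constructor <;> rintro rfl <;> simp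

@[simp] lemma vec_swap (s : Step) : s.swap.vec = s.vec.swap := by cases s <;> rfl

end Step

lemma endpt_append (a b : List Step) : endpt (a ++ b) = endpt a + endpt b := by
  simp [endpt]

def pos (w : List Step) (i : ℕ) : ℤ × ℤ := endpt (w.take i)

@[simp] lemma pos_zero (w : List Step) : pos w 0 = 0 := rfl

lemma pos_succ (w : List Step) {i : ℕ} (h : i < w.length) :
    pos w (i + 1) = pos w i + w[i].vec := by
  rw [pos, pos, List.take_add_one, endpt_append, List.getElem?_eq_getElem h]
  simp [endpt]

lemma pos_length (w : List Step) : pos w w.length = endpt w := by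
  simp [pos]

lemma pos_append_add (x l y : List Step) {j : ℕ} (hj : j ≤ l.length) :
    pos (x ++ l ++ y) (x.length + j) = endpt x + pos l j := by
  simp [pos, List.take_append, endpt_append, List.take_of_length_le (Nat.le_add_right _ j),
    Nat.sub_eq_zero_of_le hj]

lemma mem_positions {w : List Step} {p : ℤ × ℤ} :
    p ∈ positions w ↔ ∃ i ≤ w.length, pos w i = p := by
  have hfold : ∀ (l : List Step) (q : ℤ × ℤ),
      l.foldl (fun p s => p + s.vec) q = q + endpt l := by
    intro l
    induction l with
    | nil => simp [endpt]
    | cons s l ih => intro q; simp [ih, endpt, add_assoc]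
  simp [positions, List.mem_iff_getElem, List.getElem_scanl, hfold, pos, Prod.mk_zero_zero]

section Loops

variable {w : List Step} {a b c d i : ℕ}

/-- Steps `a, …, b - 1` of `w` form a QP-subloop. -/
def IsLoop (w : List Step) (a b : ℕ) : Prop :=
  a < b ∧ b ≤ w.length ∧ pos w b = pos w a ∧ ∀ k, a ≤ k → k ≤ b → pos w a ≤ pos w k

def Covered (w : List Step) (i : ℕ) : Prop := ∃ a b, IsLoop w a b ∧ a ≤ i ∧ i < b

def IsCut (w : List Step) (s : ℕ) : Prop := ∀ a b, IsLoop w a b → ¬ (a < s ∧ s < b)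

lemma IsLoop.covered (h : IsLoop w a b) (hai : a ≤ i) (hib : i < b) : Covered w i :=
  ⟨a, b, h, hai, hib⟩

lemma IsLoop.lt_length (h : IsLoop w a b) : a < w.length := lt_of_lt_of_le h.1 h.2.1

lemma isLoop_append_iff (x l y : List Step) :
    IsLoop (x ++ l ++ y) x.length (x.length + l.length) ↔ IsQPLoop l := by
  set w := x ++ l ++ y
  have hpos : ∀ j ≤ l.length, pos w (x.length + j) = endpt x + pos l j :=
    fun j hj => pos_append_add x l y hj
  have hbase : pos w x.length = endpt x := by simpa using hpos 0 (Nat.zero_le _)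
  have hmin : (∀ k, x.length ≤ k → k ≤ x.length + l.length → pos w x.length ≤ pos w k) ↔
      ∀ p ∈ positions l, 0 ≤ p.1 ∧ 0 ≤ p.2 := by
    simp only [mem_positions, forall_exists_index, and_imp, forall_apply_eq_imp_iff₂, hbase]
    constructor
    · intro h j hj
      simpa [hpos j hj, Prod.le_def] using h (x.length + j) (by omega) (by omega)
    · intro h k hk₁ hk₂
      obtain ⟨j, rfl⟩ := Nat.exists_eq_add_of_le hk₁
      simpa [hpos j (by omega), Prod.le_def] using h j (by omega)
  have hlen : x.length + l.length ≤ w.length := by simp [w]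
  rw [IsLoop, IsQPLoop, hmin, hbase, hpos l.length le_rfl, pos_length, ← List.length_pos_iff]
  simp [hlen, Prod.mk_zero_zero]

lemma standard_iff : Standard w ↔ ∀ a b, IsLoop w a b → w[a]? = some Step.N := by
  constructor
  · intro hs a b h
    obtain ⟨x, l, y, rfl, rfl, rfl⟩ := List.exists_eq_append_of_le h.1.le h.2.1
    have hq := (isLoop_append_iff x l y).1 h
    rw [List.getElem?_length_append x y hq.1]
    exact hs x l y rfl hq
  · rintro hs x l y rfl hq
    rw [← List.getElem?_length_append x y hq.1]
    exact hs _ _ ((isLoop_append_iff x l y).2 hq)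

lemma IsLoop.pos_eq_of_overlap (h₁ : IsLoop w a b) (h₂ : IsLoop w c d) (hac : a ≤ c) (hcb : c ≤ b)
    (hbd : b ≤ d) : pos w c = pos w a :=
  le_antisymm (h₁.2.2.1 ▸ h₂.2.2.2 b hcb hbd) (h₁.2.2.2 c hac hcb)

lemma IsLoop.merge (h₁ : IsLoop w a b) (h₂ : IsLoop w c d) (hac : a ≤ c) (hcb : c ≤ b) :
    IsLoop w a (max b d) := by
  rcases le_total d b with hdb | hbd
  · rwa [max_eq_left hdb]
  rw [max_eq_right hbd]
  have hca := h₁.pos_eq_of_overlap h₂ hac hcb hbd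
  refine ⟨by have := h₁.1; omega, h₂.2.1, by rw [h₂.2.2.1, hca], fun k hak hkd => ?_⟩
  rcases le_total k b with hkb | hbk
  · exact h₁.2.2.2 k hak hkb
  · exact hca ▸ h₂.2.2.2 k (by omega) hkd

lemma IsLoop.split (h : IsLoop w a b) (hac : a < c) (hcb : c < b) (hc : pos w c = pos w a) :
    IsLoop w a c ∧ IsLoop w c b :=
  ⟨⟨hac, by have := h.2.1; omega, hc, fun k hak hkc => h.2.2.2 k hak (by omega)⟩,
    ⟨hcb, h.2.1, by rw [h.2.2.1, hc], fun k hck hkb => hc ▸ h.2.2.2 k (by omega) hkb⟩⟩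

lemma covered_of_not_isCut (h : ¬ IsCut w i) : Covered w i := by
  simp only [IsCut, not_forall, not_not] at h
  obtain ⟨a, b, hab, hai, hib⟩ := h
  exact hab.covered hai.le hib

lemma isCut_length (w : List Step) : IsCut w w.length :=
  fun _ _ h hlt => absurd h.2.1 (by omega)

lemma Covered.exists_isLoop_isCut (h : Covered w i) :
    ∃ a b, IsLoop w a b ∧ a ≤ i ∧ i < b ∧ IsCut w a := by
  classical
  obtain ⟨b, hab, hai, hib⟩ := Nat.find_spec h
  refine ⟨_, b, hab, hai, hib, fun c d hcd ⟨hca, had⟩ => ?_⟩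
  have hmerge := hcd.merge hab hca.le had.le
  exact absurd (Nat.find_min' h ⟨_, hmerge, by omega, by omega⟩) (by omega)

end Loops

section Reflect

variable {w : List Step} {a b i s : ℕ}

open scoped Classical in
/-- Reflection in `x = y` swaps every step; swapping again inside the maximal QP-subloops undoes
this there. -/
noncomputable def reflectWalk (w : List Step) : List Step :=
  w.mapIdx fun i s => if Covered w i then s else s.swap

@[simp] lemma length_reflectWalk (w : List Step) : (reflectWalk w).length = w.length :=
  List.length_mapIdx

lemma getElem_reflectWalk_of_covered (hi : i < w.length) (h : Covered w i) :
    (reflectWalk w)[i]'(by simpa using hi) = w[i] := by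
  simp [reflectWalk, h]

lemma getElem_reflectWalk_of_not_covered (hi : i < w.length) (h : ¬ Covered w i) :
    (reflectWalk w)[i]'(by simpa using hi) = w[i].swap := by
  simp [reflectWalk, h]

lemma pos_reflectWalk_succ_of_covered (hi : i < w.length) (h : Covered w i) :
    pos (reflectWalk w) (i + 1) = pos (reflectWalk w) i + w[i].vec := by
  rw [pos_succ _ (by simpa using hi), getElem_reflectWalk_of_covered hi h]

lemma pos_reflectWalk_succ_of_not_covered (hi : i < w.length) (h : ¬ Covered w i) :
    pos (reflectWalk w) (i + 1) = pos (reflectWalk w) i + w[i].vec.swap := by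
  rw [pos_succ _ (by simpa using hi), getElem_reflectWalk_of_not_covered hi h, Step.vec_swap]

lemma pos_reflectWalk_fst_add_snd (hi : i ≤ w.length) :
    (pos (reflectWalk w) i).1 + (pos (reflectWalk w) i).2 = (pos w i).1 + (pos w i).2 := by
  induction i with
  | zero => rfl
  | succ i ih =>
    have hi' : i < w.length := hi
    have := ih hi'.le
    by_cases h : Covered w i
    · simp only [pos_reflectWalk_succ_of_covered hi' h, pos_succ w hi', Prod.fst_add,
        Prod.snd_add]
      omega
    · simp only [pos_reflectWalk_succ_of_not_covered hi' h, pos_succ w hi', Prod.fst_add,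
        Prod.snd_add, Prod.fst_swap, Prod.snd_swap]
      omega

lemma pos_reflectWalk_of_forall_covered (hai : a ≤ i) (hi : i ≤ w.length)
    (hcov : ∀ j, a ≤ j → j < i → Covered w j) :
    pos (reflectWalk w) i = pos (reflectWalk w) a + (pos w i - pos w a) := by
  induction i, hai using Nat.le_induction with
  | base => simp
  | succ i hai ih =>
    have hi' : i < w.length := hi
    rw [pos_reflectWalk_succ_of_covered hi' (hcov i hai (by omega)), pos_succ w hi',
      ih hi'.le fun j hj hji => hcov j hj (by omega)]
    abel

lemma pos_reflectWalk_of_isCut (hs : s ≤ w.length) (hcut : IsCut w s) :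
    pos (reflectWalk w) s = (pos w s).swap := by
  induction s using Nat.strong_induction_on with
  | _ s ih =>
  match s with
  | 0 => rfl
  | i + 1 =>
    have hi : i < w.length := hs
    by_cases h : Covered w i
    · obtain ⟨a, b, hab, hai, hib, hcut_a⟩ := h.exists_isLoop_isCut
      have hb : b = i + 1 := by
        by_contra hb
        exact hcut a b hab ⟨by omega, by omega⟩
      subst hb
      rw [pos_reflectWalk_of_forall_covered (by omega) hs fun j hj hjb => hab.covered hj hjb,
        ih a (by omega) (by omega) hcut_a, hab.2.2.1, sub_self, add_zero]
    · have hcut_i : IsCut w i := fun c d hcd hlt => h (hcd.covered hlt.1.le hlt.2)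
      rw [pos_reflectWalk_succ_of_not_covered hi h, ih i (by omega) hi.le hcut_i, pos_succ w hi,
        Prod.swap_add]

end Reflect

section ReflectLoops

variable {w : List Step} {a b i : ℕ}

lemma isLoop_reflectWalk_iff_of_forall_covered (hb : b ≤ w.length)
    (hcov : ∀ j, a ≤ j → j < b → Covered w j) : IsLoop (reflectWalk w) a b ↔ IsLoop w a b := by
  refine and_congr_right fun hab => ?_
  have key : ∀ k, a ≤ k → k ≤ b →
      pos (reflectWalk w) k - pos (reflectWalk w) a = pos w k - pos w a := fun k hak hkb => by
    rw [pos_reflectWalk_of_forall_covered hak (by omega) fun j hj hjk => hcov j hj (by omega)]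
    abel
  rw [length_reflectWalk, ← sub_eq_zero, key b hab.le le_rfl, sub_eq_zero]
  refine and_congr_right fun _ => and_congr_right fun _ =>
    forall_congr' fun k => imp_congr_right fun hak => imp_congr_right fun hkb => ?_
  rw [← sub_nonneg, key k hak hkb, sub_nonneg]

lemma isLoop_reflectWalk (h : IsLoop w a b) : IsLoop (reflectWalk w) a b :=
  (isLoop_reflectWalk_iff_of_forall_covered h.2.1 fun _ hj hjb => h.covered hj hjb).2 h

lemma isLoop_of_isLoop_reflectWalk_of_isCut (h : IsLoop (reflectWalk w) a b) (ha : IsCut w a)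
    (hb : IsCut w b) : IsLoop w a b := by
  have hab := h.1
  have hbl : b ≤ w.length := by simpa using h.2.1
  have hcut_pos : ∀ c, a ≤ c → c ≤ b → IsCut w c → pos w a ≤ pos w c := fun c hac hcb hc => by
    simpa [pos_reflectWalk_of_isCut (by omega) hc, pos_reflectWalk_of_isCut (by omega) ha]
      using h.2.2.2 c hac hcb
  refine ⟨hab, hbl, ?_, fun k hak hkb => ?_⟩
  · simpa [pos_reflectWalk_of_isCut hbl hb, pos_reflectWalk_of_isCut (by omega) ha] using h.2.2.1
  by_cases hk : IsCut w k
  · exact hcut_pos k hak hkb hk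
  obtain ⟨c, d, hcd, hck, hkd, hc⟩ := (covered_of_not_isCut hk).exists_isLoop_isCut
  have hac : a ≤ c := by
    by_contra hca
    exact ha c d hcd ⟨by omega, by omega⟩
  exact (hcut_pos c hac (by omega) hc).trans (hcd.2.2.2 k hck hkd.le)

lemma isLoop_of_isLoop_reflectWalk_of_forall_ne (h : IsLoop (reflectWalk w) a b)
    (hprime : ∀ c, a < c → c < b → pos (reflectWalk w) c ≠ pos (reflectWalk w) a) :
    IsLoop w a b := by
  have hbl : b ≤ w.length := by simpa using h.2.1
  by_cases hcov : ∀ j, a ≤ j → j < b → Covered w j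
  · exact (isLoop_reflectWalk_iff_of_forall_covered hbl hcov).1 h
  have hcov' : ∀ c d, IsLoop w c d → c ≤ a → b ≤ d → False := fun c d hcd hca hbd =>
    hcov fun j hj hjb => hcd.covered (by omega) (by omega)
  refine isLoop_of_isLoop_reflectWalk_of_isCut h (fun c d hcd ⟨hca, had⟩ => ?_)
    (fun c d hcd ⟨hcb, hbd⟩ => ?_)
  · rcases le_or_gt b d with hbd | hdb
    · exact hcov' c d hcd hca.le hbd
    have hcd' := isLoop_reflectWalk hcd
    exact hprime d had hdb (hcd'.2.2.1.trans (hcd'.pos_eq_of_overlap h hca.le had.le hdb.le).symm)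
  · rcases le_or_gt c a with hca | hac
    · exact hcov' c d hcd hca hbd.le
    exact hprime c hac hcb (h.pos_eq_of_overlap (isLoop_reflectWalk hcd) hac.le hcb.le hbd.le)

lemma isLoop_of_isLoop_reflectWalk (h : IsLoop (reflectWalk w) a b) : IsLoop w a b := by
  induction hn : b - a using Nat.strong_induction_on generalizing a b with
  | _ n ih =>
  by_cases htouch : ∃ c, a < c ∧ c < b ∧ pos (reflectWalk w) c = pos (reflectWalk w) a
  · obtain ⟨c, hac, hcb, hc⟩ := htouch
    obtain ⟨h₁, h₂⟩ := h.split hac hcb hc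
    simpa [max_eq_right hcb.le] using
      (ih _ (by omega) h₁ rfl).merge (ih _ (by omega) h₂ rfl) hac.le le_rfl
  · push Not at htouch
    exact isLoop_of_isLoop_reflectWalk_of_forall_ne h htouch

lemma isLoop_reflectWalk_iff : IsLoop (reflectWalk w) a b ↔ IsLoop w a b :=
  ⟨isLoop_of_isLoop_reflectWalk, isLoop_reflectWalk⟩

lemma covered_reflectWalk_iff : Covered (reflectWalk w) i ↔ Covered w i := by
  simp only [Covered, isLoop_reflectWalk_iff]

lemma reflectWalk_involutive : Function.Involutive reflectWalk := by
  intro w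
  refine List.ext_getElem (by simp) fun i hi _ => ?_
  have hi' : i < w.length := by simpa using hi
  by_cases h : Covered w i
  · rw [getElem_reflectWalk_of_covered (by simpa using hi') (covered_reflectWalk_iff.2 h),
      getElem_reflectWalk_of_covered hi' h]
  · rw [getElem_reflectWalk_of_not_covered (by simpa using hi') (mt covered_reflectWalk_iff.1 h),
      getElem_reflectWalk_of_not_covered hi' h, Step.swap_swap]

end ReflectLoops

section WalkProperties

variable {w : List Step} {i : ℕ}

lemma eager_iff : Eager w ↔ ∀ i (h : i + 1 < w.length),
    ¬ (w[i] = Step.E ∧ w[i + 1] = Step.S) ∧ ¬ (w[i] = Step.N ∧ w[i + 1] = Step.W) := by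
  simp only [Eager, List.pair_infix_iff, not_exists, ← forall_and]

lemma covered_succ_of_vec_add_eq_zero (hi : i + 1 < w.length) (hnonneg : 0 ≤ w[i].vec)
    (hsum : w[i].vec + w[i + 1].vec = 0) : Covered w (i + 1) := by
  have h₁ := pos_succ w (i := i) (by omega)
  have h₂ : pos w (i + 2) = pos w i := by
    rw [pos_succ w hi, h₁, add_assoc, hsum, add_zero]
  refine IsLoop.covered (a := i) (b := i + 2) ⟨by omega, hi, h₂, fun k hik hki => ?_⟩
    (by omega) (by omega)
  obtain rfl | rfl | rfl : k = i ∨ k = i + 1 ∨ k = i + 2 := by omega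
  · exact le_rfl
  · exact h₁ ▸ le_add_of_nonneg_right hnonneg
  · exact h₂.ge

lemma Standard.getElem_succ_eq_N (hs : Standard w) (hi : i + 1 < w.length) (h : ¬ Covered w i)
    (h' : Covered w (i + 1)) : w[i + 1] = Step.N := by
  obtain ⟨a, b, hab, hai, hib⟩ := h'
  obtain rfl : a = i + 1 := by
    by_contra ha
    exact h (hab.covered (by omega) (by omega))
  simpa [List.getElem?_eq_getElem hi] using standard_iff.1 hs _ _ hab

lemma endpt_reflectWalk (w : List Step) : endpt (reflectWalk w) = (endpt w).swap := by
  rw [← pos_length, ← pos_length, length_reflectWalk,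
    pos_reflectWalk_of_isCut le_rfl (isCut_length w)]

lemma InHalfPlane.reflectWalk (h : InHalfPlane w) : InHalfPlane (reflectWalk w) := by
  simp only [InHalfPlane, mem_positions, length_reflectWalk, forall_exists_index, and_imp]
    at h ⊢
  rintro _ i hi rfl
  rw [pos_reflectWalk_fst_add_snd hi]
  exact h _ i hi rfl

lemma Standard.reflectWalk (h : Standard w) : Standard (reflectWalk w) := by
  rw [standard_iff] at h ⊢
  intro a b hab
  have hab' := isLoop_reflectWalk_iff.1 hab
  have ha := hab'.lt_length
  rw [List.getElem?_eq_getElem (by simpa using ha),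
    getElem_reflectWalk_of_covered ha (hab'.covered le_rfl hab'.1), ← List.getElem?_eq_getElem ha]
  exact h a b hab'

lemma Eager.reflectWalk (he : Eager w) (hs : Standard w) : Eager (reflectWalk w) := by
  rw [eager_iff] at he ⊢
  intro i hi
  have hi' : i + 1 < w.length := by simpa using hi
  have hback := covered_succ_of_vec_add_eq_zero hi'
  by_cases h₀ : Covered w i <;> by_cases h₁ : Covered w (i + 1)
  · rw [getElem_reflectWalk_of_covered (by omega) h₀, getElem_reflectWalk_of_covered hi' h₁]
    exact he i hi'
  · rw [getElem_reflectWalk_of_covered (by omega) h₀, getElem_reflectWalk_of_not_covered hi' h₁]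
    simp only [Step.swap_eq_iff]
    simp only [Step.swap]
    constructor <;> rintro ⟨hx, hy⟩ <;> exact h₁ (hback (by simp [hx, Step.vec, Prod.le_def])
      (by simp [hx, hy, Step.vec]))
  · rw [getElem_reflectWalk_of_not_covered (by omega) h₀, getElem_reflectWalk_of_covered hi' h₁,
      hs.getElem_succ_eq_N hi' h₀ h₁]
    simp
  · rw [getElem_reflectWalk_of_not_covered (by omega) h₀,
      getElem_reflectWalk_of_not_covered hi' h₁]
    simp only [Step.swap_eq_iff]
    simpa only [Step.swap] using (he i hi').symm

lemma IsBigWalk.reflectWalk (h : IsBigWalk w) : IsBigWalk (reflectWalk w) := by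
  obtain ⟨hhalf, hdiag, hs, he⟩ := h
  refine ⟨hhalf.reflectWalk, ?_, hs.reflectWalk, he.reflectWalk hs⟩
  rw [endpt_reflectWalk, Prod.fst_swap, Prod.snd_swap, add_comm, hdiag]

lemma IsLeftWalk.reflectWalk (h : IsLeftWalk w) : IsRightWalk (reflectWalk w) := by
  refine ⟨h.1.reflectWalk, ?_⟩
  have := h.1.2.1
  rw [endpt_reflectWalk, Prod.fst_swap]
  linarith [h.2]

lemma IsRightWalk.reflectWalk (h : IsRightWalk w) : IsLeftWalk (reflectWalk w) := by
  refine ⟨h.1.reflectWalk, ?_⟩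
  have := h.1.2.1
  rw [endpt_reflectWalk, Prod.fst_swap]
  linarith [h.2]

end WalkProperties

/-- For each n, the number of left-walks of length 2n equals the number of
right-walks of length 2n. -/
theorem leftWalks_eq_rightWalks (n : ℕ) : blCount n = brCount n :=
  Nat.card_congr <| (reflectWalk_involutive.toPerm _).subtypeEquiv fun w => by
    rw [Function.Involutive.coe_toPerm, length_reflectWalk]
    exact and_congr_right fun _ =>
      ⟨IsLeftWalk.reflectWalk, fun h => reflectWalk_involutive w ▸ h.reflectWalk⟩
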